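/- Every veto graph partnership in a communication situation (N, v, Γ) is a veto partnership in the graph-restricted game (N, v^Γ): if GP is a veto graph partnership, then v^Γ(T ∪ S) = 0 for all T ⊆ N∖GP and all proper subsets S ⊊ GP. -/

import Mathlib

open Finset

noncomputable section
open scoped Classical

namespace TUGame

variable {ι : Type*} [Fintype ι] [DecidableEq ι]

/-- Harsanyi dividend of coalition `T` in game `v`. -/
def dividend (v : Finset ι → ℝ) (T : Finset ι) : ℝ :=
  ∑ R ∈ T.powerset, (-1 : ℝ) ^ (T.card - R.card) * v R

/-- Unanimity game of coalition `T`. -/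
def unanimity (T S : Finset ι) : ℝ := if T ⊆ S then 1 else 0

/-- Shapley value of player `i` in game `v`. -/
def shapley (v : Finset ι → ℝ) (i : ι) : ℝ :=
  ∑ S ∈ Finset.univ.powerset.filter (fun S => i ∈ S),
    (((S.card - 1).factorial * (Fintype.card ι - S.card).factorial : ℕ) : ℝ) /
      (((Fintype.card ι).factorial : ℕ) : ℝ) * (v S - v (S.erase i))

/-- Shapley interaction index, defined via discrete derivatives. -/
def SIderiv (v : Finset ι → ℝ) (S : Finset ι) : ℝ :=
  ∑ T ∈ (Finset.univ \ S).powerset,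
    (((Fintype.card ι - T.card - S.card).factorial * T.card.factorial : ℕ) : ℝ) /
      (((Fintype.card ι - S.card + 1).factorial : ℕ) : ℝ) *
    ∑ L ∈ S.powerset, (-1 : ℝ) ^ (S.card - L.card) * v (T ∪ L)

/-- Shapley interaction index, expressed via Harsanyi dividends. -/
def SIdiv (v : Finset ι → ℝ) (S : Finset ι) : ℝ :=
  ∑ T ∈ Finset.univ.powerset.filter (fun T => S ⊆ T),
    dividend v T / ((T.card - S.card + 1 : ℕ) : ℝ)

/-- The subgraph of `G` induced by the coalition `S` (as a graph on the same vertex set). -/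
def restrict (G : SimpleGraph ι) (S : Finset ι) : SimpleGraph ι where
  Adj i j := G.Adj i j ∧ i ∈ S ∧ j ∈ S
  symm := ⟨fun i j h => ⟨h.1.symm, h.2.2, h.2.1⟩⟩
  loopless := ⟨fun i h => G.loopless.irrefl i h.1⟩

/-- Connected component of `i` in the subgraph induced by `S`. -/
def comp (G : SimpleGraph ι) (S : Finset ι) (i : ι) : Finset ι :=
  S.filter fun j => (restrict G S).Reachable i j

/-- Connected component of `i` in `G`. -/
def component (G : SimpleGraph ι) (i : ι) : Finset ι := comp G Finset.univ i

/-- Myerson graph-restricted game: sum of `v` over the connected components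
of the subgraph induced by `S`. -/
def restrictedGame (G : SimpleGraph ι) (v : Finset ι → ℝ) (S : Finset ι) : ℝ :=
  ∑ C ∈ S.image (comp G S), v C

/-- Myerson interaction index. -/
def MI (G : SimpleGraph ι) (v : Finset ι → ℝ) (S : Finset ι) : ℝ :=
  SIdiv (restrictedGame G v) S

/-- The subgraph induced by `S` is connected. -/
def ConnectedOn (G : SimpleGraph ι) (S : Finset ι) : Prop :=
  ∀ i ∈ S, ∀ j ∈ S, (restrict G S).Reachable i j

/-- `R` is a minimal `T`-connecting set of nodes in `G`. -/
def MinimalConnecting (G : SimpleGraph ι) (T R : Finset ι) : Prop :=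
  T ⊆ R ∧ ConnectedOn G R ∧ ∀ R' ⊂ R, ¬ (T ⊆ R' ∧ ConnectedOn G R')

/-- `i` is an intermediary of `T` in `G`. -/
def Intermediary (G : SimpleGraph ι) (T : Finset ι) (i : ι) : Prop :=
  ∃ R, MinimalConnecting G T R ∧ i ∈ R ∧ i ∉ T

/-- `i` is an essential intermediary of `T` in `G`. -/
def EssentialIntermediary (G : SimpleGraph ι) (T : Finset ι) (i : ι) : Prop :=
  i ∉ T ∧ ∀ R, MinimalConnecting G T R → i ∈ R

/-- `i` is a null player in game `v`. -/
def NullPlayer (v : Finset ι → ℝ) (i : ι) : Prop :=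
  ∀ S : Finset ι, i ∉ S → v (insert i S) = v S

/-- `i` is a graph null player in the communication situation `(N, v, G)`. -/
def GraphNull (G : SimpleGraph ι) (v : Finset ι → ℝ) (i : ι) : Prop :=
  NullPlayer v i ∧
    ∀ j k : ι, j ≠ k → j ≠ i → k ≠ i → Intermediary G {j, k} i →
      NullPlayer v j ∨ NullPlayer v k

/-- `P` is a veto partnership in game `v`. -/
def VetoPartnership (v : Finset ι → ℝ) (P : Finset ι) : Prop :=
  P.Nonempty ∧ ∀ T : Finset ι, T ⊆ Finset.univ \ P →
    v T = 0 ∧ ∀ S ⊂ P, v (T ∪ S) = 0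

/-- `GP` is a veto graph partnership in `(N, v, G)`. -/
def VetoGraphPartnership (G : SimpleGraph ι) (v : Finset ι → ℝ) (GP : Finset ι) : Prop :=
  GP.Nonempty ∧ ∃ P, VetoPartnership v P ∧
    ∀ i ∈ GP, i ∈ P ∨ EssentialIntermediary G P i

/-- Cutnodes of `S`: nodes of `S` whose removal disconnects the induced subgraph on `S`. -/
def cutnodes (G : SimpleGraph ι) (S : Finset ι) : Finset ι :=
  S.filter fun i => ¬ ConnectedOn G (S.erase i)

end TUGame

/-! Every component `C` of `T ∪ S` is connected. If `C` contained the veto partnership `P`, it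
would contain a minimal `P`-connecting set and hence every essential intermediary of `P`, so
`GP ⊆ C ⊆ T ∪ S`, which is impossible as `S ⊂ GP` and `T` misses `GP`. Hence `C` misses a member
of `P`, and the veto property gives `v C = 0`. -/

namespace TUGame

variable {ι : Type*} (G : SimpleGraph ι)

lemma minimalConnecting_iff {T R : Finset ι} :
    MinimalConnecting G T R ↔ Minimal (fun R => T ⊆ R ∧ ConnectedOn G R) R := by
  rw [minimal_iff_forall_lt, MinimalConnecting, and_assoc]

lemma exists_minimalConnecting_subset {T C : Finset ι} (hTC : T ⊆ C) (hC : ConnectedOn G C) :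
    ∃ R ⊆ C, MinimalConnecting G T R := by
  simp only [minimalConnecting_iff]
  exact exists_minimal_le_of_wellFoundedLT _ C ⟨hTC, hC⟩

lemma EssentialIntermediary.mem_of_connectedOn {T C : Finset ι} {i : ι}
    (hi : EssentialIntermediary G T i) (hTC : T ⊆ C) (hC : ConnectedOn G C) : i ∈ C :=
  let ⟨R, hRC, hR⟩ := exists_minimalConnecting_subset G hTC hC
  hRC (hi.2 R hR)

variable [Fintype ι] [DecidableEq ι]

lemma comp_subset (A : Finset ι) (i : ι) : comp G A i ⊆ A :=
  filter_subset _ _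

/-- A walk of `restrict G A` from `i` never leaves `comp G A i`, so it transfers to the graph
induced on the component. -/
lemma reachable_restrict_comp {A : Finset ι} {i j : ι} (hj : j ∈ comp G A i) :
    (restrict G (comp G A i)).Reachable i j := by
  obtain ⟨p⟩ := (mem_filter.1 hj).2
  have mem_comp_of_mem_support {x : ι} (hxA : x ∈ A) (hx : x ∈ p.support) : x ∈ comp G A i :=
    mem_filter.2 ⟨hxA, ⟨p.takeUntil x hx⟩⟩
  refine ⟨p.transfer _ fun e he => ?_⟩
  induction e using Sym2.ind with
  | h a b =>
    obtain ⟨hab, haA, hbA⟩ := p.adj_of_mem_edges he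
    exact ⟨hab, mem_comp_of_mem_support haA (p.fst_mem_support_of_mem_edges he),
      mem_comp_of_mem_support hbA (p.snd_mem_support_of_mem_edges he)⟩

lemma connectedOn_comp (A : Finset ι) (i : ι) : ConnectedOn G (comp G A i) :=
  fun _ hj _ hk => (reachable_restrict_comp G hj).symm.trans (reachable_restrict_comp G hk)

lemma VetoPartnership.eq_zero_of_not_subset {v : Finset ι → ℝ} {P C : Finset ι}
    (hP : VetoPartnership v P) (hPC : ¬ P ⊆ C) : v C = 0 := by
  have hCP : C ∩ P ⊂ P := inter_subset_right.ssubset_of_ne fun h => hPC (h ▸ inter_subset_left)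
  rw [← sdiff_union_inter C P]
  exact (hP.2 (C \ P) (sdiff_subset_sdiff (subset_univ C) subset_rfl)).2 _ hCP

lemma VetoGraphPartnership.restrictedGame_eq_zero_of_not_subset {v : Finset ι → ℝ}
    {GP A : Finset ι} (h : VetoGraphPartnership G v GP) (hA : ¬ GP ⊆ A) :
    restrictedGame G v A = 0 := by
  obtain ⟨-, P, hP, hGP⟩ := h
  refine sum_eq_zero fun C hC => hP.eq_zero_of_not_subset fun hPC => hA fun g hg => ?_
  obtain ⟨i, -, rfl⟩ := mem_image.1 hC
  refine comp_subset G A i ?_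
  rcases hGP g hg with hgP | hgE
  · exact hPC hgP
  · exact hgE.mem_of_connectedOn G hPC (connectedOn_comp G A i)

end TUGame

open TUGame

/-- every veto graph partnership is a veto partnership in the
graph-restricted game. -/
theorem vetoGraphPartnership_restrictedGame {ι : Type*} [Fintype ι] [DecidableEq ι]
    (G : SimpleGraph ι) (v : Finset ι → ℝ) (GP : Finset ι)
    (h : VetoGraphPartnership G v GP) :
    ∀ T ⊆ Finset.univ \ GP, ∀ S ⊂ GP, restrictedGame G v (T ∪ S) = 0 := by
  intro T hT S hS
  refine h.restrictedGame_eq_zero_of_not_subset G fun hGP => ?_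
  obtain ⟨g, hg, hgS⟩ := exists_of_ssubset hS
  rcases mem_union.1 (hGP hg) with hgT | hgS'
  · exact (mem_sdiff.1 (hT hgT)).2 hg
  · exact hgS hgS'
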